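/- For every λ > 0 and all a, c ∈ ℝ, ∫_a^∞ ( 1 − Φ(λ + (c − z)/(2λ)) ) e^{−z} dz = e^{−a} + e^{−c} − Φ(λ + (a−c)/(2λ)) e^{−c} − Φ(λ − (a−c)/(2λ)) e^{−a}. -/

import Mathlib

/-!
The integrand has the explicit primitive
`G(z) = Φ(l + u) e^{-c} + Φ(l - u) e^{-z} - e^{-z}` with `u = (z - c) / (2l)`.
Differentiating, the two density terms cancel because `(l + u)² - (l - u)² = 4lu = 2(z - c)`,
i.e. `φ(l + u) e^{-c} = φ(l - u) e^{-z}`. As `z → ∞`, `G(z) → e^{-c}`, and the integral is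
`e^{-c} - G(a)`.
-/

open MeasureTheory Filter Real Set Topology

/-- Standard normal density. -/
noncomputable def stdPdf (t : ℝ) : ℝ := (Real.sqrt (2 * Real.pi))⁻¹ * Real.exp (-(t ^ 2) / 2)

/-- Standard normal CDF. -/
noncomputable def stdCdf (x : ℝ) : ℝ := ∫ t in Set.Iic x, stdPdf t

lemma stdPdf_eq_gaussianPDFReal : stdPdf = ProbabilityTheory.gaussianPDFReal 0 1 := by
  ext t
  simp [stdPdf, ProbabilityTheory.gaussianPDFReal]

lemma stdPdf_nonneg (t : ℝ) : 0 ≤ stdPdf t := by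
  unfold stdPdf; positivity

lemma continuous_stdPdf : Continuous stdPdf := by
  unfold stdPdf; fun_prop

lemma integrable_stdPdf : Integrable stdPdf :=
  stdPdf_eq_gaussianPDFReal ▸ ProbabilityTheory.integrable_gaussianPDFReal 0 1

lemma integral_stdPdf : ∫ t, stdPdf t = 1 :=
  stdPdf_eq_gaussianPDFReal ▸ ProbabilityTheory.integral_gaussianPDFReal_eq_one 0 one_ne_zero

lemma stdPdf_add_eq_stdPdf_sub_mul_exp (x u : ℝ) :
    stdPdf (x + u) = stdPdf (x - u) * exp (-(2 * x * u)) := by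
  unfold stdPdf
  rw [mul_assoc, ← exp_add]
  ring_nf

lemma stdCdf_add_integral_Ioi (x : ℝ) : stdCdf x + ∫ t in Ioi x, stdPdf t = 1 := by
  rw [stdCdf, intervalIntegral.integral_Iic_add_Ioi integrable_stdPdf.integrableOn
    integrable_stdPdf.integrableOn, integral_stdPdf]

lemma hasDerivAt_stdCdf (x : ℝ) : HasDerivAt stdCdf (stdPdf x) x := by
  have hFTC : HasDerivAt (fun y => stdCdf 0 + ∫ t in (0 : ℝ)..y, stdPdf t) (stdPdf x) x :=
    (intervalIntegral.integral_hasDerivAt_right integrable_stdPdf.intervalIntegrable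
      (continuous_stdPdf.stronglyMeasurableAtFilter _ _) continuous_stdPdf.continuousAt).const_add _
  refine hFTC.congr_of_eventuallyEq (Eventually.of_forall fun y => ?_)
  dsimp only
  rw [stdCdf, stdCdf, ← intervalIntegral.integral_Iic_sub_Iic integrable_stdPdf.integrableOn
    integrable_stdPdf.integrableOn, add_sub_cancel]

lemma continuous_stdCdf : Continuous stdCdf :=
  continuous_iff_continuousAt.2 fun x => (hasDerivAt_stdCdf x).continuousAt

lemma stdCdf_nonneg (x : ℝ) : 0 ≤ stdCdf x :=
  integral_nonneg stdPdf_nonneg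

lemma stdCdf_le_one (x : ℝ) : stdCdf x ≤ 1 := by
  rw [← stdCdf_add_integral_Ioi x, le_add_iff_nonneg_right]
  exact integral_nonneg stdPdf_nonneg

lemma tendsto_stdCdf_atBot : Tendsto stdCdf atBot (𝓝 0) :=
  tendsto_integral_Iic_zero tendsto_id

lemma tendsto_stdCdf_atTop : Tendsto stdCdf atTop (𝓝 1) := by
  have h := (tendsto_integral_Ioi_zero (f := stdPdf) (μ := volume) tendsto_id).const_sub 1
  rw [sub_zero] at h
  exact h.congr fun x => by rw [← stdCdf_add_integral_Ioi x, id, add_sub_cancel_right]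

lemma integrableOn_one_sub_stdCdf_comp_mul_exp_neg {f : ℝ → ℝ} (hf : Measurable f) (a : ℝ) :
    IntegrableOn (fun z => (1 - stdCdf (f z)) * exp (-z)) (Ioi a) := by
  have hexp : IntegrableOn (fun z : ℝ => exp (-z)) (Ioi a) := by
    simpa using exp_neg_integrableOn_Ioi a one_pos
  refine hexp.bdd_mul (c := 1) ?_ (Eventually.of_forall fun z => ?_)
  · exact (measurable_const.sub (continuous_stdCdf.measurable.comp hf)).aestronglyMeasurable
  · rw [Real.norm_eq_abs, abs_le]
    constructor <;> linarith [stdCdf_nonneg (f z), stdCdf_le_one (f z)]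

noncomputable def tailExpPrimitive (l c z : ℝ) : ℝ :=
  stdCdf (l + (z - c) / (2 * l)) * exp (-c) + stdCdf (l - (z - c) / (2 * l)) * exp (-z) - exp (-z)

lemma hasDerivAt_tailExpPrimitive {l : ℝ} (hl : l ≠ 0) (c z : ℝ) :
    HasDerivAt (tailExpPrimitive l c) ((1 - stdCdf (l + (c - z) / (2 * l))) * exp (-z)) z := by
  set u := (z - c) / (2 * l)
  have hu : HasDerivAt (fun z => (z - c) / (2 * l)) (1 / (2 * l)) z :=
    ((hasDerivAt_id z).sub_const c).div_const _
  have hexp : HasDerivAt (fun z => exp (-z)) (-exp (-z)) z := by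
    simpa using (hasDerivAt_neg z).exp
  have hΦplus := ((hasDerivAt_stdCdf (l + u)).comp z (hu.const_add l)).mul_const (exp (-c))
  have hΦminus := ((hasDerivAt_stdCdf (l - u)).comp z (hu.const_sub l)).mul hexp
  refine ((hΦplus.add hΦminus).sub hexp).congr_deriv ?_
  have hcancel : stdPdf (l + u) * exp (-c) = stdPdf (l - u) * exp (-z) := by
    have h2lu : 2 * l * u = z - c := mul_div_cancel₀ _ (mul_ne_zero two_ne_zero hl)
    rw [stdPdf_add_eq_stdPdf_sub_mul_exp, mul_assoc, ← exp_add, h2lu]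
    ring_nf
  have harg : l + (c - z) / (2 * l) = l - u := by ring
  rw [harg, Function.comp_apply]
  linear_combination (1 / (2 * l)) * hcancel

lemma tendsto_tailExpPrimitive_atTop {l : ℝ} (hl : 0 < l) (c : ℝ) :
    Tendsto (tailExpPrimitive l c) atTop (𝓝 (exp (-c))) := by
  have hu : Tendsto (fun z => (z - c) / (2 * l)) atTop atTop :=
    (tendsto_atTop_add_const_right _ (-c) tendsto_id).atTop_div_const (by positivity)
  have hexp : Tendsto (fun z : ℝ => exp (-z)) atTop (𝓝 0) := tendsto_exp_neg_atTop_nhds_zero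
  have hΦplus :=
    (tendsto_stdCdf_atTop.comp (tendsto_atTop_add_const_left _ l hu)).mul_const (exp (-c))
  have hΦminus := (tendsto_stdCdf_atBot.comp
    (tendsto_atBot_add_const_left _ l (tendsto_neg_atTop_atBot.comp hu))).mul hexp
  have h := (hΦplus.add hΦminus).sub hexp
  rw [one_mul, mul_zero, add_zero, sub_zero] at h
  exact h

theorem stmt17 (l : ℝ) (hl : 0 < l) (a c : ℝ) :
    ∫ z in Set.Ioi a, (1 - stdCdf (l + (c - z) / (2 * l))) * Real.exp (-z)
      = Real.exp (-a) + Real.exp (-c)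
        - stdCdf (l + (a - c) / (2 * l)) * Real.exp (-c)
        - stdCdf (l - (a - c) / (2 * l)) * Real.exp (-a) := by
  rw [integral_Ioi_of_hasDerivAt_of_tendsto'
    (fun z _ => hasDerivAt_tailExpPrimitive hl.ne' c z)
    (integrableOn_one_sub_stdCdf_comp_mul_exp_neg (by fun_prop) a)
    (tendsto_tailExpPrimitive_atTop hl c), tailExpPrimitive]
  ring
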